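/- Let $\lambda, \mu$ be complex numbers with $\lambda \neq 0$ and $\lambda n + \mu \neq 0$ for all integers $n \ge 0$, and set $\kappa = \mu/\lambda$. Let $d_n^{(k)}$ be the determinant of the $n \times n$ Hankel matrix with $(i,j)$-entry $\frac{1}{\lambda(i+j+k-2)+\mu}$. Then $d_n^{(k)} = \frac{1}{\lambda^n} \cdot \frac{\prod_{i=1}^{n-1}(i!)^2}{\prod_{i=1}^{n}\prod_{j=1}^{n}(i+j+k+\kappa-2)}$. -/

import Mathlib

/-!
Writing `1 / (λ(i + j + k) + μ) = λ⁻¹ / ((i + k + κ) + j)`, the matrix is `λ⁻¹` times a Cauchy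
matrix `1 / (x i + y j)`. Its determinant is computed by Cauchy's formula, proved by induction:
the Schur complement of the last diagonal entry of a Cauchy matrix is the smaller Cauchy matrix
scaled by a diagonal matrix on each side. For `x i = i + c`, `y j = j` the Vandermonde-type
numerator `∏_{i<j} (x j - x i)(y j - y i)` collapses to `∏_j (j!)²`.
-/

open Finset Matrix

theorem det_eq_mul_det_schur_last {K : Type*} [Field K] {n : ℕ}
    (A : Matrix (Fin (n + 1)) (Fin (n + 1)) K) (h : A (Fin.last n) (Fin.last n) ≠ 0) :
    A.det = A (Fin.last n) (Fin.last n) *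
      (of fun i j : Fin n => A i.castSucc j.castSucc -
        A i.castSucc (Fin.last n) * A (Fin.last n) j.castSucc / A (Fin.last n) (Fin.last n)).det := by
  set L := Fin.last n
  set c : Fin (n + 1) → K := fun i => if i = L then 0 else -(A i L / A L L)
  set B : Matrix (Fin (n + 1)) (Fin (n + 1)) K := of fun i j => A i j + c i * A L j
  have hB : B.det = A.det :=
    det_eq_of_forall_row_eq_smul_add_const c L (by simp [c]) fun _ _ => rfl
  have hBL : ∀ i, i ≠ L → B i L = 0 := fun i hi => by
    simp only [B, c, of_apply, if_neg hi]
    field_simp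
    ring
  have hBLL : B L L = A L L := by simp [B, c]
  have hsub : B.submatrix Fin.castSucc Fin.castSucc = of fun i j : Fin n =>
      A i.castSucc j.castSucc - A i.castSucc L * A L j.castSucc / A L L := by
    ext i j
    simp [B, c, L, (Fin.castSucc_lt_last i).ne]
    ring
  rw [← hB, det_succ_column B L, sum_eq_single L (fun i _ hi => by simp [hBL i hi]) (by simp),
    hBLL, Fin.succAbove_last, hsub]
  simp

theorem det_cauchy_succ {K : Type*} [Field K] (x y : ℕ → K) (n : ℕ)
    (h : ∀ i j, i ≤ n → j ≤ n → x i + y j ≠ 0) :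
    (of fun i j : Fin (n + 1) => (x i + y j)⁻¹).det =
      (x n + y n)⁻¹ * (∏ i ∈ range n, (x n - x i) / (x i + y n)) *
        (∏ j ∈ range n, (y n - y j) / (x n + y j)) *
          (of fun i j : Fin n => (x i + y j)⁻¹).det := by
  rw [det_eq_mul_det_schur_last _ (by simpa using inv_ne_zero (h n n le_rfl le_rfl))]
  have hschur : (of fun i j : Fin n =>
      (x i + y j)⁻¹ - (x i + y n)⁻¹ * (x n + y j)⁻¹ / (x n + y n)⁻¹) =
      diagonal (fun i : Fin n => (x n - x i) / (x i + y n)) *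
        (of fun i j : Fin n => (x i + y j)⁻¹) *
          diagonal (fun j : Fin n => (y n - y j) / (x n + y j)) := by
    ext i j
    have hij := h i j i.is_lt.le j.is_lt.le
    have hin := h i n i.is_lt.le le_rfl
    have hnj := h n j le_rfl j.is_lt.le
    have hnn := h n n le_rfl le_rfl
    simp only [of_apply, mul_diagonal, diagonal_mul]
    field_simp
    ring
  simp only [of_apply, Fin.val_last, Fin.val_castSucc]
  rw [hschur, det_mul, det_mul, det_diagonal, det_diagonal,
    Fin.prod_univ_eq_prod_range (fun i => (x n - x i) / (x i + y n)),
    Fin.prod_univ_eq_prod_range (fun j => (y n - y j) / (x n + y j))]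
  ring

theorem det_cauchy {K : Type*} [Field K] (x y : ℕ → K) (n : ℕ)
    (h : ∀ i j, i < n → j < n → x i + y j ≠ 0) :
    (of fun i j : Fin n => (x i + y j)⁻¹).det =
      (∏ j ∈ range n, ∏ i ∈ range j, (x j - x i) * (y j - y i)) /
        ∏ i ∈ range n, ∏ j ∈ range n, (x i + y j) := by
  induction n with
  | zero => simp
  | succ n ih =>
    rw [det_cauchy_succ x y n fun i j hi hj => h i j (by omega) (by omega),
      ih fun i j hi hj => h i j (by omega) (by omega)]
    have hrow : ∏ i ∈ range n, (x i + y n) ≠ 0 :=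
      prod_ne_zero_iff.mpr fun i hi => h i n (by simp at hi; omega) (by omega)
    have hcol : ∏ j ∈ range n, (x n + y j) ≠ 0 :=
      prod_ne_zero_iff.mpr fun j hj => h n j (by omega) (by simp at hj; omega)
    have hsquare : ∏ i ∈ range n, ∏ j ∈ range n, (x i + y j) ≠ 0 :=
      prod_ne_zero_iff.mpr fun i hi => prod_ne_zero_iff.mpr fun j hj =>
        h i j (by simp at hi; omega) (by simp at hj; omega)
    have hcorner := h n n (by omega) (by omega)
    simp only [prod_range_succ, prod_mul_distrib, prod_div_distrib]
    field_simp

theorem det_shiftedHilbert {K : Type*} [Field K] (c : K) (n : ℕ)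
    (h : ∀ i j, i < n → j < n → (i : K) + j + c ≠ 0) :
    (of fun i j : Fin n => ((i : K) + j + c)⁻¹).det =
      (∏ j ∈ range n, (j.factorial : K) ^ 2) /
        ∏ i ∈ range n, ∏ j ∈ range n, ((i : K) + j + c) := by
  have hcauchy := det_cauchy (fun i => (i : K) + c) (fun j => (j : K)) n
    fun i j hi hj => by simpa [add_right_comm] using h i j hi hj
  simp only [add_right_comm _ c] at hcauchy
  rw [hcauchy]
  congr 1
  refine prod_congr rfl fun j _ => ?_
  rw [← Nat.descFactorial_self, Nat.descFactorial_eq_prod_range, ← prod_range_natCast_sub,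
    ← prod_pow]
  refine prod_congr rfl fun i _ => ?_
  ring

theorem prod_Icc_one_eq_prod_range {M : Type*} [CommMonoid M] (f : ℕ → M) (n : ℕ) :
    ∏ i ∈ Icc 1 n, f i = ∏ i ∈ range n, f (i + 1) := by
  rw [← Ico_add_one_right_eq_Icc, prod_Ico_eq_prod_range]
  simp [add_comm]

theorem stmt7 (lam mu : ℂ) (n k : ℕ) (hlam : lam ≠ 0)
    (hden : ∀ m : ℕ, lam * m + mu ≠ 0) :
    (Matrix.of fun i j : Fin n =>
        (1 : ℂ) / (lam * ((i : ℕ) + (j : ℕ) + k : ℕ) + mu)).det =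
      1 / lam ^ n *
        ((∏ i ∈ Finset.Icc 1 (n - 1), (i.factorial : ℂ) ^ 2) /
          ∏ i ∈ Finset.Icc 1 n, ∏ j ∈ Finset.Icc 1 n, ((i : ℂ) + j + k + mu / lam - 2)) := by
  have hfactor : ∀ i j : ℕ,
      lam * ((i + j + k : ℕ) : ℂ) + mu = lam * ((i : ℂ) + j + (k + mu / lam)) := fun i j => by
    push_cast
    field_simp
    ring
  have hmatrix : (of fun i j : Fin n => (1 : ℂ) / (lam * ((i : ℕ) + (j : ℕ) + k : ℕ) + mu)) =
      lam⁻¹ • of fun i j : Fin n => ((i : ℂ) + j + (k + mu / lam))⁻¹ := by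
    ext i j
    rw [of_apply, hfactor, one_div, mul_inv, Matrix.smul_apply, of_apply, smul_eq_mul]
  have hne : ∀ i j, i < n → j < n → (i : ℂ) + j + (k + mu / lam) ≠ 0 := fun i j _ _ =>
    right_ne_zero_of_mul (hfactor i j ▸ hden (i + j + k))
  have hfactorials : ∏ j ∈ range n, (j.factorial : ℂ) ^ 2 =
      ∏ i ∈ Icc 1 (n - 1), (i.factorial : ℂ) ^ 2 := by
    cases n with
    | zero => simp
    | succ m => simp [prod_range_succ', prod_Icc_one_eq_prod_range]
  have hentries : ∏ i ∈ range n, ∏ j ∈ range n, ((i : ℂ) + j + (k + mu / lam)) =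
      ∏ i ∈ Icc 1 n, ∏ j ∈ Icc 1 n, ((i : ℂ) + j + k + mu / lam - 2) := by
    simp only [prod_Icc_one_eq_prod_range, Nat.cast_add, Nat.cast_one]
    refine prod_congr rfl fun i _ => prod_congr rfl fun j _ => ?_
    ring
  rw [hmatrix, det_smul, det_shiftedHilbert _ n hne, Fintype.card_fin, hfactorials, hentries,
    inv_pow, one_div]
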